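/- Let E ⊆ X × Y be measurable in a graded probability space, with E μ-stable (d-μ-stable for some d). Then there exists a partition of X into countably many measurable sets, each of which is perfect for E. -/

import Mathlib

open Set MeasureTheory
open scoped ENNReal

/-- The index set `2^{<d}` of 0-1 sequences of length `< d`. -/
abbrev TreeIdx (d : ℕ) := (i : Fin d) × (Fin i.val → Bool)

/-- The set `E^σ_{(b_{σ|_0}, …, b_{σ|_{i-1}})}` along the branch `σ ∈ 2^i`. -/
def branchSet {X Y : Type*} (E : Set (X × Y)) {d : ℕ} (b : TreeIdx d → Y)
    (i : Fin d) (σ : Fin i.val → Bool) : Set X :=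
  {x | ∀ j : Fin i.val,
    ((x, b ⟨⟨j.1, j.2.trans i.2⟩, fun k => σ ⟨k.1, k.2.trans j.2⟩⟩) ∈ E ↔ σ j = true)}

/-- The set of μ-trees of height `d` for `E`. -/
def muTreeSet {X Y : Type*} [MeasurableSpace X] (μX : Measure X)
    (E : Set (X × Y)) (d : ℕ) : Set (TreeIdx d → Y) :=
  {b | ∀ (i : Fin d) (σ : Fin i.val → Bool),
    0 < μX (branchSet E b i σ ∩ {x | (x, b ⟨i, σ⟩) ∈ E}) ∧
    0 < μX (branchSet E b i σ \ {x | (x, b ⟨i, σ⟩) ∈ E})}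

/-- `A` is perfect for `E`: the set of `y` whose fiber μ-splits `A` has measure zero. -/
def PerfectFor {X Y : Type*} [MeasurableSpace X] [MeasurableSpace Y]
    (μX : Measure X) (μY : Measure Y) (E : Set (X × Y)) (A : Set X) : Prop :=
  μY {y | 0 < μX (A ∩ {x | (x, y) ∈ E}) ∧ 0 < μX (A \ {x | (x, y) ∈ E})} = 0

/-!
Every measurable set `A` of positive measure contains a perfect subset of positive measure.
Otherwise each `A ∩ branchSet E b i σ` has positive measure (it is one half of the split of its
parent) and is therefore split by the fibres `E_y` of a positive-measure set of `y`; choosing the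
labels of a tree one level at a time, Fubini's theorem gives a positive-measure set of μ-trees
of height `d`, against stability. Greedily removing perfect sets of at least half the largest
available measure then exhausts `X` up to a null set, which is trivially perfect.
-/

section Exhaustion

variable {X : Type*} [MeasurableSpace X] {μ : Measure X} [IsFiniteMeasure μ] {p : Set X → Prop}

theorem exists_subset_forall_measure_le_two_mul (hp_empty : p ∅) (R : Set X) :
    ∃ P ⊆ R, MeasurableSet P ∧ p P ∧
      ∀ Q ⊆ R, MeasurableSet Q → p Q → μ Q ≤ 2 * μ P := by
  set s := ⨆ Q : {Q // Q ⊆ R ∧ MeasurableSet Q ∧ p Q}, μ Q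
  have hle : ∀ Q ⊆ R, MeasurableSet Q → p Q → μ Q ≤ s :=
    fun Q hQR hQ hpQ => le_iSup (fun Q : {Q // Q ⊆ R ∧ MeasurableSet Q ∧ p Q} => μ Q)
      ⟨Q, hQR, hQ, hpQ⟩
  rcases eq_or_ne s 0 with hs | hs
  · exact ⟨∅, empty_subset R, .empty, hp_empty, fun Q hQR hQ hpQ => by
      simpa [hs] using hle Q hQR hQ hpQ⟩
  have hs_top : s ≠ ∞ := ne_top_of_le_ne_top (measure_ne_top μ univ)
    (iSup_le fun Q => measure_mono (subset_univ _))
  obtain ⟨⟨P, hPR, hP, hpP⟩, hsP⟩ := lt_iSup_iff.1 (ENNReal.half_lt_self hs hs_top)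
  refine ⟨P, hPR, hP, hpP, fun Q hQR hQ hpQ => (hle Q hQR hQ hpQ).trans ?_⟩
  calc s = 2 * (s / 2) := (ENNReal.mul_div_cancel two_ne_zero ENNReal.ofNat_ne_top).symm
    _ ≤ 2 * μ P := by gcongr

/-- Greedy exhaustion: the removed measures are summable, and each bounds half the measure of
any good set that survives all steps. -/
theorem exists_pairwise_disjoint_measure_compl_iUnion_eq_zero (hp_empty : p ∅)
    (hsub : ∀ A, MeasurableSet A → 0 < μ A → ∃ P ⊆ A, MeasurableSet P ∧ 0 < μ P ∧ p P) :
    ∃ A : ℕ → Set X, (∀ n, MeasurableSet (A n)) ∧ Pairwise (Function.onFun Disjoint A) ∧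
      (∀ n, p (A n)) ∧ μ (⋃ n, A n)ᶜ = 0 := by
  choose P hPR hP hpP hPmax using exists_subset_forall_measure_le_two_mul (μ := μ) hp_empty
  set rest : ℕ → Set X := fun n => (fun R => R \ P R)^[n] univ
  have rest_succ : ∀ n, rest (n + 1) = rest n \ P (rest n) :=
    fun n => Function.iterate_succ_apply' _ n univ
  have rest_anti : Antitone rest :=
    antitone_nat_of_succ_le fun n => (rest_succ n).trans_subset sdiff_subset
  have hdisj : Pairwise (Function.onFun Disjoint fun n => P (rest n)) := by
    refine (pairwise_disjoint_on _).2 fun m n hmn => ?_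
    have : P (rest n) ⊆ rest m \ P (rest m) :=
      (hPR _).trans ((rest_anti (Nat.succ_le_of_lt hmn)).trans (rest_succ m).subset)
    exact disjoint_sdiff_self_right.mono_right this
  refine ⟨fun n => P (rest n), fun n => hP _, hdisj, fun n => hpP _, ?_⟩
  have hcompl : ∀ n, (⋃ k, P (rest k))ᶜ ⊆ rest n := by
    intro n
    induction n with
    | zero => exact subset_univ _
    | succ n ih =>
      rw [rest_succ]
      exact subset_sdiff.2
        ⟨ih, disjoint_compl_left.mono_right (subset_iUnion (fun k => P (rest k)) n)⟩
  have hlim : Filter.Tendsto (fun n => 2 * μ (P (rest n))) Filter.atTop (nhds 0) := by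
    have hsum : ∑' n, μ (P (rest n)) ≠ ∞ := by
      rw [← measure_iUnion hdisj fun n => hP _]
      exact measure_ne_top μ _
    simpa using ENNReal.Tendsto.const_mul (ENNReal.tendsto_atTop_zero_of_tsum_ne_top hsum)
      (Or.inr ENNReal.ofNat_ne_top)
  by_contra hpos
  obtain ⟨Q, hQ, hQm, hQpos, hpQ⟩ := hsub _ (MeasurableSet.iUnion fun n => hP _).compl
    (pos_iff_ne_zero.2 hpos)
  have hQle : μ Q ≤ 0 :=
    ge_of_tendsto' hlim fun n => hPmax _ Q (hQ.trans (hcompl n)) hQm hpQ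
  exact hQpos.not_ge hQle

theorem exists_partition_of_forall_exists_subset (hp_empty : p ∅)
    (hp_ae : ∀ ⦃A B⦄, A =ᵐ[μ] B → p A → p B)
    (hsub : ∀ A, MeasurableSet A → 0 < μ A → ∃ P ⊆ A, MeasurableSet P ∧ 0 < μ P ∧ p P) :
    ∃ A : ℕ → Set X, (∀ n, MeasurableSet (A n)) ∧ Pairwise (Function.onFun Disjoint A) ∧
      (⋃ n, A n) = univ ∧ ∀ n, p (A n) := by
  obtain ⟨A, hA, hdisj, hpA, hnull⟩ :=
    exists_pairwise_disjoint_measure_compl_iUnion_eq_zero hp_empty hsub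
  refine ⟨fun | 0 => (⋃ n, A n)ᶜ | n + 1 => A n, ?_, ?_, ?_, ?_⟩
  · rintro (_ | n)
    exacts [(MeasurableSet.iUnion hA).compl, hA n]
  · rintro (_ | m) (_ | n) hmn
    · exact absurd rfl hmn
    · exact disjoint_compl_left.mono_right (subset_iUnion A n)
    · exact (disjoint_compl_left.mono_right (subset_iUnion A m)).symm
    · exact hdisj fun h => hmn (congrArg (· + 1) h)
  · rw [← union_iUnion_nat_succ]
    exact compl_union_self _
  · rintro (_ | n)
    exacts [hp_ae (ae_eq_empty.2 hnull).symm hp_empty, hpA n]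

end Exhaustion

section ProductPositivity

variable {ι : Type*} [DecidableEq ι] {X : ι → Type*}

theorem updateFinset_mem_of_rank_lt_succ [Fintype ι] (ρ : ι → ℕ) {F : ι → Set (∀ i, X i)}
    (hdep : ∀ i x y, (∀ j, ρ j < ρ i → x j = y j) → x i = y i → (x ∈ F i ↔ y ∈ F i))
    {k : ℕ} {x : ∀ i, X i} (hx : ∀ j, ρ j < k → x ∈ F j)
    {y : ∀ i : Finset.univ.filter (ρ · = k), X i}
    (hy : ∀ i : Finset.univ.filter (ρ · = k), Function.update x i (y i) ∈ F i)
    {j : ι} (hj : ρ j < k + 1) :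
    Function.updateFinset x _ y ∈ F j := by
  have hlow : ∀ l, ρ l < k → Function.updateFinset x _ y l = x l := fun l hl =>
    dif_neg fun hl' => by have := (Finset.mem_filter.1 hl').2; omega
  rcases Nat.lt_succ_iff_lt_or_eq.1 hj with hj | rfl
  · exact (hdep j _ x (fun l hl => hlow l (hl.trans hj)) (hlow j hj)).2 (hx j hj)
  have hjk : j ∈ Finset.univ.filter (ρ · = ρ j) := by simp
  refine (hdep j _ (Function.update x j (y ⟨j, hjk⟩)) (fun l hl => ?_) ?_).2 (hy ⟨j, hjk⟩)
  · rw [hlow l hl, Function.update_of_ne (by rintro rfl; omega)]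
  · rw [Function.update_self]
    exact dif_pos hjk

variable [∀ i, MeasurableSpace (X i)] {μ : ∀ i, Measure (X i)} [∀ i, SigmaFinite (μ i)]

theorem lmarginal_pos_of_forall_mem_pi {g : (∀ i, X i) → ℝ≥0∞} (hg : Measurable g)
    {s : Finset ι} (x : ∀ i, X i) {U : ∀ i : s, Set (X i)} (hU : ∀ i : s, 0 < μ i (U i))
    (hgU : ∀ y ∈ univ.pi U, 0 < g (Function.updateFinset x s y)) :
    0 < (∫⋯∫⁻_s, g ∂μ) x := by
  have hbox : 0 < Measure.pi (fun i : s => μ i) (univ.pi U) := by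
    rw [Measure.pi_pi]
    exact CanonicallyOrderedAdd.prod_pos.2 fun i _ => hU i
  refine (lintegral_pos_iff_support (hg.comp measurable_updateFinset)).2 ?_
  exact hbox.trans_le (measure_mono fun y hy => (hgU y hy).ne')

theorem measure_pi_iInter_pos [Fintype ι] [Nonempty (∀ i, X i)] (ρ : ι → ℕ)
    {F : ι → Set (∀ i, X i)} (hF : ∀ i, MeasurableSet (F i))
    (hdep : ∀ i x y, (∀ j, ρ j < ρ i → x j = y j) → x i = y i → (x ∈ F i ↔ y ∈ F i))
    (hpos : ∀ i x, (∀ j, ρ j < ρ i → x ∈ F j) → 0 < μ i {y | Function.update x i y ∈ F i}) :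
    0 < Measure.pi μ (⋂ i, F i) := by
  set f := (⋂ i, F i).indicator (1 : (∀ i, X i) → ℝ≥0∞)
  have hf : Measurable f := measurable_one.indicator (.iInter hF)
  set T : ℕ → Finset ι := fun k => Finset.univ.filter (k ≤ ρ ·)
  obtain ⟨N, hN⟩ : ∃ N, ∀ i, ρ i < N :=
    ⟨Finset.univ.sup ρ + 1, fun i => Nat.lt_succ_of_le (Finset.le_sup (Finset.mem_univ i))⟩
  -- Downward induction on the rank: the good values of the rank-`k` coordinates form a box.
  have key : ∀ n k, N ≤ k + n → ∀ x, (∀ j, ρ j < k → x ∈ F j) → 0 < (∫⋯∫⁻_T k, f ∂μ) x := by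
    intro n
    induction n with
    | zero =>
      intro k hk x hx
      have hT : T k = ∅ := Finset.filter_false_of_mem fun i _ => by have := hN i; omega
      have hx : x ∈ ⋂ i, F i := mem_iInter.2 fun i => hx i (by have := hN i; omega)
      simp [hT, f, hx]
    | succ n ih =>
      intro k hk x hx
      have hT : T k = Finset.univ.filter (ρ · = k) ∪ T (k + 1) := by
        ext i
        simp only [T, Finset.mem_union, Finset.mem_filter, Finset.mem_univ, true_and]
        omega
      have hdisj : Disjoint (Finset.univ.filter (ρ · = k)) (T (k + 1)) := by
        simp only [T, Finset.disjoint_filter]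
        omega
      rw [hT, lmarginal_union μ f hf hdisj]
      refine lmarginal_pos_of_forall_mem_pi (hf.lmarginal μ) x
        (U := fun i => {y | Function.update x i y ∈ F i}) (fun i => hpos i x fun j hj => hx j ?_)
        fun y hy => ih (k + 1) (by omega) _ fun j hj =>
          updateFinset_mem_of_rank_lt_succ ρ hdep hx (fun i => hy i (mem_univ i)) hj
      have := (Finset.mem_filter.1 i.2).2
      omega
  obtain ⟨x⟩ := ‹Nonempty (∀ i, X i)›
  simpa [f, lintegral_indicator_one (MeasurableSet.iInter hF), T] using
    key N 0 (by omega) x fun j hj => absurd hj (Nat.not_lt_zero _)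

end ProductPositivity

namespace MeasureTheory.Measure

variable {X : Type*} [MeasurableSpace X] {μ : Measure X} {S A B : Set X}

def Splits (μ : Measure X) (S A : Set X) : Prop :=
  0 < μ (A ∩ S) ∧ 0 < μ (A \ S)

theorem Splits.mono (h : μ.Splits S A) (hAB : A ⊆ B) : μ.Splits S B :=
  ⟨h.1.trans_le (measure_mono (inter_subset_inter_left S hAB)),
    h.2.trans_le (measure_mono (sdiff_subset_sdiff_left hAB))⟩

theorem Splits.measure_inter_setOf_iff_pos (h : μ.Splits S A) (t : Bool) :
    0 < μ (A ∩ {x | x ∈ S ↔ t = true}) := by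
  cases t
  · simp only [Bool.false_eq_true, iff_false]
    exact h.2
  · simp only [iff_true, ofPred_mem_eq]
    exact h.1

theorem splits_congr_ae (h : A =ᵐ[μ] B) : μ.Splits S A ↔ μ.Splits S B := by
  have h_inter : μ (A ∩ S) = μ (B ∩ S) := measure_congr (h.inter (ae_eq_refl S))
  have h_diff : μ (A \ S) = μ (B \ S) := measure_congr (h.diff (ae_eq_refl S))
  rw [Splits, Splits, h_inter, h_diff]

theorem measurableSet_setOf_splits {Z : Type*} [MeasurableSpace Z] [SFinite μ]
    {S A : Set (Z × X)} (hS : MeasurableSet S) (hA : MeasurableSet A) :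
    MeasurableSet {z | μ.Splits (Prod.mk z ⁻¹' S) (Prod.mk z ⁻¹' A)} :=
  (measurableSet_lt measurable_const (measurable_measure_prodMk_left (hA.inter hS))).inter
    (measurableSet_lt measurable_const (measurable_measure_prodMk_left (hA.diff hS)))

end MeasureTheory.Measure

section PerfectFor

variable {X Y : Type*} [MeasurableSpace X] [MeasurableSpace Y] {μX : Measure X}
  {μY : Measure Y} {E : Set (X × Y)} {A B : Set X}

theorem perfectFor_empty : PerfectFor μX μY E ∅ := by
  simp [PerfectFor]

theorem PerfectFor.congr_ae (h : A =ᵐ[μX] B) (hA : PerfectFor μX μY E A) :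
    PerfectFor μX μY E B := by
  have hsplits : {y | μX.Splits {x | (x, y) ∈ E} A} = {y | μX.Splits {x | (x, y) ∈ E} B} :=
    Set.ext fun y => Measure.splits_congr_ae h
  change μY {y | μX.Splits {x | (x, y) ∈ E} B} = 0
  rwa [← hsplits]

end PerfectFor

section Trees

variable {X Y : Type*} {E : Set (X × Y)} {d : ℕ}

theorem branchSet_congr {b c : TreeIdx d → Y} {i : Fin d} (σ : Fin i.val → Bool)
    (h : ∀ j : TreeIdx d, j.1.val < i.val → b j = c j) :
    branchSet E b i σ = branchSet E c i σ := by
  ext x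
  refine forall_congr' fun j => ?_
  rw [h _ j.2]

theorem branchSet_zero (b : TreeIdx d → Y) (hd : 0 < d) (σ : Fin 0 → Bool) :
    branchSet E b ⟨0, hd⟩ σ = univ :=
  eq_univ_of_forall fun _ j => j.elim0

theorem branchSet_succ (b : TreeIdx d → Y) {m : ℕ} (hm : m + 1 < d) (σ : Fin (m + 1) → Bool) :
    branchSet E b ⟨m + 1, hm⟩ σ =
      branchSet E b ⟨m, by omega⟩ (fun k => σ k.castSucc) ∩
        {x | (x, b ⟨⟨m, by omega⟩, fun k => σ k.castSucc⟩) ∈ E ↔ σ (Fin.last m) = true} := by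
  ext x
  exact Fin.forall_fin_succ'

theorem measure_inter_branchSet_pos [MeasurableSpace X] {μ : Measure X} {A : Set X} (hA : 0 < μ A)
    {b : TreeIdx d → Y} {i : Fin d} (σ : Fin i.val → Bool)
    (hb : ∀ j : TreeIdx d, j.1.val < i.val →
      μ.Splits {x | (x, b j) ∈ E} (A ∩ branchSet E b j.1 j.2)) :
    0 < μ (A ∩ branchSet E b i σ) := by
  obtain ⟨_ | m, hi⟩ := i
  · rwa [branchSet_zero, inter_univ]
  · rw [branchSet_succ, ← inter_assoc]
    have hparent := hb ⟨⟨m, by omega⟩, fun k => σ k.castSucc⟩ (Nat.lt_succ_self m)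
    exact hparent.measure_inter_setOf_iff_pos _

variable [MeasurableSpace X] [MeasurableSpace Y]

theorem measurableSet_setOf_mem_branchSet (hE : MeasurableSet E) (i : Fin d)
    (σ : Fin i.val → Bool) :
    MeasurableSet {q : (TreeIdx d → Y) × X | q.2 ∈ branchSet E q.1 i σ} := by
  simp only [branchSet, ofPred_forall, mem_iInter, mem_ofPred_eq]
  refine .iInter fun j => ?_
  refine measurableSet_setOfPred.2 (Measurable.iff ?_ measurable_const)
  exact (measurable_mem.2 hE).comp
    (measurable_snd.prodMk ((measurable_pi_apply _).comp measurable_fst))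

theorem measurableSet_branchSet (hE : MeasurableSet E) (b : TreeIdx d → Y) (i : Fin d)
    (σ : Fin i.val → Bool) : MeasurableSet (branchSet E b i σ) :=
  measurable_prodMk_left (measurableSet_setOf_mem_branchSet hE i σ)

theorem measure_muTreeSet_pos {μX : Measure X} [SFinite μX] {μY : Measure Y}
    [SigmaFinite μY] [Nonempty Y] (hE : MeasurableSet E) {A : Set X} (hA : MeasurableSet A)
    (hA0 : 0 < μX A)
    (hsplit : ∀ P ⊆ A, MeasurableSet P → 0 < μX P →
      0 < μY {y | μX.Splits {x | (x, y) ∈ E} P}) (d : ℕ) :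
    0 < Measure.pi (fun _ : TreeIdx d => μY) (muTreeSet μX E d) := by
  set F : TreeIdx d → Set (TreeIdx d → Y) :=
    fun j => {b | μX.Splits {x | (x, b j) ∈ E} (A ∩ branchSet E b j.1 j.2)}
  have hF : ∀ j, MeasurableSet (F j) := fun j =>
    Measure.measurableSet_setOf_splits
      (hE.preimage (measurable_snd.prodMk ((measurable_pi_apply j).comp measurable_fst)))
      ((measurable_snd hA).inter (measurableSet_setOf_mem_branchSet hE j.1 j.2))
  have hdep : ∀ j b c, (∀ l : TreeIdx d, l.1.val < j.1.val → b l = c l) → b j = c j →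
      (b ∈ F j ↔ c ∈ F j) := by
    intro j b c hlow hj
    simp only [F, mem_ofPred_eq, hj, branchSet_congr j.2 hlow]
  have hpos : ∀ j b, (∀ l : TreeIdx d, l.1.val < j.1.val → b ∈ F l) →
      0 < μY {y | Function.update b j y ∈ F j} := by
    intro j b hlow
    have hsec : ∀ y, branchSet E (Function.update b j y) j.1 j.2 = branchSet E b j.1 j.2 :=
      fun y => branchSet_congr j.2 fun l hl => Function.update_of_ne (by rintro rfl; omega) y b
    simp only [F, mem_ofPred_eq, Function.update_self, hsec]
    exact hsplit _ inter_subset_left (hA.inter (measurableSet_branchSet hE b j.1 j.2))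
      (measure_inter_branchSet_pos hA0 j.2 hlow)
  refine (measure_pi_iInter_pos (fun j : TreeIdx d => j.1.val) hF hdep hpos).trans_le
    (measure_mono fun b hb i σ => ?_)
  exact (mem_iInter.1 hb ⟨i, σ⟩).mono inter_subset_right

theorem exists_perfectFor_subset {μX : Measure X} [SFinite μX] {μY : Measure Y}
    [SigmaFinite μY] [Nonempty Y] (hE : MeasurableSet E) {d : ℕ}
    (hd : Measure.pi (fun _ : TreeIdx d => μY) (muTreeSet μX E d) = 0) {A : Set X}
    (hA : MeasurableSet A) (hA0 : 0 < μX A) :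
    ∃ P ⊆ A, MeasurableSet P ∧ 0 < μX P ∧ PerfectFor μX μY E P := by
  by_contra! h
  have htrees := measure_muTreeSet_pos (μY := μY) hE hA hA0
    (fun P hPA hP hP0 => pos_iff_ne_zero.2 (h P hPA hP hP0)) d
  exact htrees.ne' hd

end Trees

/-- A μ-stable relation admits a countable partition of `X` into measurable perfect
sets. -/
theorem partition_into_perfect_sets
    {X Y : Type*} [MeasurableSpace X] [MeasurableSpace Y]
    (μX : Measure X) (μY : Measure Y)
    [IsProbabilityMeasure μX] [IsProbabilityMeasure μY]
    (E : Set (X × Y)) (hE : MeasurableSet E)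
    (hstab : ∃ d : ℕ, 1 ≤ d ∧
      (Measure.pi fun _ : TreeIdx d => μY) (muTreeSet μX E d) = 0) :
    ∃ A : ℕ → Set X,
      (∀ i, MeasurableSet (A i)) ∧
      Pairwise (Function.onFun Disjoint A) ∧
      (⋃ i, A i) = univ ∧
      ∀ i, PerfectFor μX μY E (A i) := by
  obtain ⟨d, -, hd⟩ := hstab
  have := nonempty_of_isProbabilityMeasure μY
  exact exists_partition_of_forall_exists_subset perfectFor_empty
    (fun _ _ h hA => hA.congr_ae h) fun _ hA hA0 => exists_perfectFor_subset hE hd hA hA0
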